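/- Let I, J, K be finite sets, r a recollement of I,J and s a recollement of J,K, and let u be a recollement of I,J,K with π₁,₂(u) = r and π₁,₃(u) restricted appropriately. Fix d ∈ ℕ with #(π₁,₃(u)) ≤ d. The number of ways to extend a fixed sequence ((i₁,k₁),…,(i_d,k_d)) adapted to π₁,₃(u) by elements j₁,…,j_d ∈ J ⊔ {∅} so that both ((i_a,j_a))_a is adapted to r and ((j_a,k_a))_a is adapted to s equals the falling factorial (d − #π₁,₃(u))(d − #π₁,₃(u) − 1)⋯(d − #u + 1). -/

import Mathlib

/-- A recollement of three sets `I`, `J`, `K`: an equivalence relation on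
`I ⊔ J ⊔ K` whose classes contain at most one element of each of `I`, `J`, `K`. -/
def IsRecollement3 {I J K : Type*} (u : Setoid (I ⊕ J ⊕ K)) : Prop :=
  (∀ i i' : I, u (Sum.inl i) (Sum.inl i') → i = i') ∧
  (∀ j j' : J, u (Sum.inr (Sum.inl j)) (Sum.inr (Sum.inl j')) → j = j') ∧
  (∀ k k' : K, u (Sum.inr (Sum.inr k)) (Sum.inr (Sum.inr k')) → k = k')

/-- Restriction `π₁,₂` of an equivalence relation on `I ⊔ J ⊔ K` to `I ⊔ J`. -/
def pi12 {I J K : Type*} (u : Setoid (I ⊕ J ⊕ K)) : Setoid (I ⊕ J) :=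
  Setoid.comap (Sum.map id Sum.inl) u

/-- Restriction `π₂,₃` of an equivalence relation on `I ⊔ J ⊔ K` to `J ⊔ K`. -/
def pi23 {I J K : Type*} (u : Setoid (I ⊕ J ⊕ K)) : Setoid (J ⊕ K) :=
  Setoid.comap Sum.inr u

/-- Restriction `π₁,₃` of an equivalence relation on `I ⊔ J ⊔ K` to `I ⊔ K`. -/
def pi13 {I J K : Type*} (u : Setoid (I ⊕ J ⊕ K)) : Setoid (I ⊕ K) :=
  Setoid.comap (Sum.map id Sum.inr) u

/-- A sequence `((i₁,j₁),…,(i_d,j_d))` with entries in `(A ⊔ {∅}) × (B ⊔ {∅})`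
is adapted to a recollement `r` of `A` and `B` if, after deleting the pairs
`(∅,∅)`, it enumerates the equivalence classes of `r` exactly once each
(where a class is recorded as `(i,j)`, `(i,∅)` or `(∅,j)`). -/
def Adapted {A B : Type*} {d : ℕ} (r : Setoid (A ⊕ B)) (f : Fin d → Option A × Option B) : Prop :=
  (∀ i : A, ∃! a : Fin d, (f a).1 = some i) ∧
  (∀ j : B, ∃! a : Fin d, (f a).2 = some j) ∧
  (∀ (a : Fin d) (i : A) (j : B), f a = (some i, some j) → r (Sum.inl i) (Sum.inr j)) ∧
  (∀ (a : Fin d) (i : A), f a = (some i, none) → ∀ j : B, ¬ r (Sum.inl i) (Sum.inr j)) ∧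
  (∀ (a : Fin d) (j : B), f a = (none, some j) → ∀ i : A, ¬ r (Sum.inl i) (Sum.inr j))

/-! A sequence adapted to a recollement is the same thing as an injective placement of its classes
at the positions `Fin d`, each position holding exactly the members of the class placed there.
So the extensions `h` of `g` correspond to the injective maps `Quotient u ↪ Fin d` extending the
placement `Quotient (pi13 u) ↪ Fin d` given by `g`, with `h a` the element of `J` in the class
placed at `a`. Extending a fixed injection of `m` of the `n` classes into `d` positions can be done
in `(d - m)(d - m - 1)⋯(d - n + 1)` ways. -/

open Function

namespace Function.Embedding

theorem card_extensions_sumInl {γ δ β : Type*} (e : γ ↪ β) :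
    Nat.card {p : γ ⊕ δ ↪ β // ∀ c, p (Sum.inl c) = e c} = Nat.card (δ ↪ ↥(Set.range e)ᶜ) :=
  Nat.card_congr <| (Equiv.sumEmbeddingEquivSigmaEmbeddingRestricted.subtypeEquiv
    (q := fun s => s.1 = e) fun p => by
      simp only [Function.Embedding.ext_iff]; rfl).trans (Equiv.sigmaSubtype e)

theorem card_extensions {α β γ : Type*} [Finite α] [Finite β] (ι : γ ↪ α) (e : γ ↪ β) :
    Nat.card {p : α ↪ β // ∀ c, p (ι c) = e c} =
      (Nat.card β - Nat.card γ).descFactorial (Nat.card α - Nat.card γ) := by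
  classical
  let σ : γ ⊕ ↥(Set.range ι)ᶜ ≃ α :=
    (Equiv.sumCongr (Equiv.ofInjective ι ι.injective) (Equiv.refl _)).trans
      (Equiv.Set.sumCompl (Set.range ι))
  have : Finite γ := Finite.of_injective ι ι.injective
  have := Fintype.ofFinite α; have := Fintype.ofFinite β; have := Fintype.ofFinite γ
  calc Nat.card {p : α ↪ β // ∀ c, p (ι c) = e c}
      = Nat.card {p : γ ⊕ ↥(Set.range ι)ᶜ ↪ β // ∀ c, p (Sum.inl c) = e c} :=
        Nat.card_congr <| (Equiv.embeddingCongr σ.symm (Equiv.refl β)).subtypeEquiv fun p => by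
          simp [σ]
    _ = Nat.card (↥(Set.range ι)ᶜ ↪ ↥(Set.range e)ᶜ) := card_extensions_sumInl e
    _ = _ := by
      simp only [Nat.card_eq_fintype_card, Fintype.card_embedding_eq, Fintype.card_compl_set,
        Fintype.card_range]

end Function.Embedding

def Setoid.comapQuotientEmbedding {α β : Type*} (f : α → β) (r : Setoid β) :
    Quotient (r.comap f) ↪ Quotient r where
  toFun := Quotient.map' f fun _ _ => id
  inj' := by
    rintro ⟨x⟩ ⟨y⟩ h
    have h' : (⟦f x⟧ : Quotient r) = ⟦f y⟧ := h
    exact Quotient.sound (show r (f x) (f y) from Quotient.exact h')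

/-- `O a x` says that `x` sits at position `a`. In a placement every class of `s` sits, as a
whole, at a position of its own. -/
def IsPlacement {X P : Type*} (s : Setoid X) (O : P → X → Prop) : Prop :=
  (∀ x, ∃! a, O a x) ∧ ∀ a x y, O a x → (O a y ↔ s x y)

namespace IsPlacement

variable {X Y P : Type*} {s : Setoid X} {O : P → X → Prop}

theorem comap (h : IsPlacement s O) (φ : Y → X) :
    IsPlacement (s.comap φ) (fun a y => O a (φ y)) :=
  ⟨fun y => h.1 (φ y), fun a x y => h.2 a (φ x) (φ y)⟩

theorem iff_exists_embedding :
    IsPlacement s O ↔ ∃ p : Quotient s ↪ P, ∀ a x, O a x ↔ p ⟦x⟧ = a := by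
  constructor
  · intro h
    choose pos hpos huniq using h.1
    have hpos_eq : ∀ a x, O a x ↔ pos x = a :=
      fun a x => ⟨fun h => (huniq x a h).symm, fun e => e ▸ hpos x⟩
    refine ⟨⟨Quotient.lift pos fun x y hxy => ?_, ?_⟩, fun a x => hpos_eq a x⟩
    · exact huniq y _ ((h.2 _ x y (hpos x)).2 hxy)
    · rintro ⟨x⟩ ⟨y⟩ hxy
      exact Quotient.sound ((h.2 _ x y (hpos x)).1 ((hpos_eq _ y).2 hxy.symm))
  · rintro ⟨p, hp⟩
    refine ⟨fun x => ⟨p ⟦x⟧, (hp _ x).2 rfl, fun a ha => ((hp a x).1 ha).symm⟩,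
      fun a x y hx => ?_⟩
    rw [hp, ← (hp a x).1 hx, p.injective.eq_iff, Quotient.eq]
    exact ⟨Setoid.symm, Setoid.symm⟩

end IsPlacement

theorem Quotient.embedding_eq_of_forall_iff {X P : Type*} {s : Setoid X} {O : P → X → Prop}
    {p p' : Quotient s ↪ P} (hp : ∀ a x, O a x ↔ p ⟦x⟧ = a)
    (hp' : ∀ a x, O a x ↔ p' ⟦x⟧ = a) : p = p' := by
  ext ⟨x⟩
  exact ((hp' _ x).1 ((hp _ x).2 rfl)).symm

def IsRecollement {A B : Type*} (r : Setoid (A ⊕ B)) : Prop :=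
  (∀ a a' : A, r (Sum.inl a) (Sum.inl a') → a = a') ∧
  (∀ b b' : B, r (Sum.inr b) (Sum.inr b') → b = b')

def Occurs {A B P : Type*} (f : P → Option A × Option B) (a : P) : A ⊕ B → Prop :=
  Sum.elim (fun i => (f a).1 = some i) (fun j => (f a).2 = some j)

section Adapted

variable {A B : Type*} {d : ℕ} {r : Setoid (A ⊕ B)} {f : Fin d → Option A × Option B}

theorem Adapted.snd_eq_some_iff (hr : IsRecollement r) (hf : Adapted r f) {a : Fin d} {i : A}
    (hi : (f a).1 = some i) (j : B) : (f a).2 = some j ↔ r (Sum.inl i) (Sum.inr j) := by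
  refine ⟨fun hj => hf.2.2.1 a i j (Prod.ext hi hj), fun hij => ?_⟩
  match hj : (f a).2 with
  | none => exact absurd hij (hf.2.2.2.1 a i (Prod.ext hi hj) j)
  | some j' => rw [hr.2 _ _ (r.trans (r.symm (hf.2.2.1 a i j' (Prod.ext hi hj))) hij)]

theorem Adapted.fst_eq_some_iff (hr : IsRecollement r) (hf : Adapted r f) {a : Fin d} {j : B}
    (hj : (f a).2 = some j) (i : A) : (f a).1 = some i ↔ r (Sum.inl i) (Sum.inr j) := by
  refine ⟨fun hi => hf.2.2.1 a i j (Prod.ext hi hj), fun hij => ?_⟩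
  match hi : (f a).1 with
  | none => exact absurd hij (hf.2.2.2.2 a j (Prod.ext hi hj) i)
  | some i' => rw [hr.1 _ _ (r.trans (hf.2.2.1 a i' j (Prod.ext hi hj)) (r.symm hij))]

theorem adapted_iff_isPlacement (hr : IsRecollement r) :
    Adapted r f ↔ IsPlacement r (Occurs f) := by
  constructor
  · intro hf
    refine ⟨Sum.rec hf.1 hf.2.1, ?_⟩
    rintro a (i | j) (i' | j') (hx : _ = _)
    · exact ⟨fun hi' => by rw [Option.some_inj.1 (hx.symm.trans hi')],
        fun hii' => by rw [← hr.1 _ _ hii']; exact hx⟩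
    · exact hf.snd_eq_some_iff hr hx j'
    · exact (hf.fst_eq_some_iff hr hx i').trans ⟨r.symm, r.symm⟩
    · exact ⟨fun hj' => by rw [Option.some_inj.1 (hx.symm.trans hj')],
        fun hjj' => by rw [← hr.2 _ _ hjj']; exact hx⟩
  · intro hP
    refine ⟨fun i => hP.1 (Sum.inl i), fun j => hP.1 (Sum.inr j), fun a i j hf => ?_,
      fun a i hf j hij => ?_, fun a j hf i hij => ?_⟩
    · exact (hP.2 a (Sum.inl i) (Sum.inr j) (congrArg Prod.fst hf)).1 (congrArg Prod.snd hf)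
    · simpa [Occurs, hf] using (hP.2 a (Sum.inl i) (Sum.inr j) (congrArg Prod.fst hf)).2 hij
    · simpa [Occurs, hf] using
        (hP.2 a (Sum.inr j) (Sum.inl i) (congrArg Prod.snd hf)).2 (r.symm hij)

end Adapted

namespace IsRecollement3

variable {I J K : Type*} {u : Setoid (I ⊕ J ⊕ K)}

theorem isRecollement_pi12 (hu : IsRecollement3 u) : IsRecollement (pi12 u) := ⟨hu.1, hu.2.1⟩

theorem isRecollement_pi23 (hu : IsRecollement3 u) : IsRecollement (pi23 u) := hu.2

theorem isRecollement_pi13 (hu : IsRecollement3 u) : IsRecollement (pi13 u) := ⟨hu.1, hu.2.2⟩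

end IsRecollement3

section Extension

variable {I J K : Type*} {d : ℕ} (u : Setoid (I ⊕ J ⊕ K)) (g : Fin d → Option I × Option K)

def IsAdaptedExtension (h : Fin d → Option J) : Prop :=
  Adapted (pi12 u) (fun a => ((g a).1, h a)) ∧ Adapted (pi23 u) (fun a => (h a, (g a).2))

def Occurs3 (h : Fin d → Option J) (a : Fin d) : I ⊕ J ⊕ K → Prop :=
  Sum.elim (fun i => (g a).1 = some i) (Sum.elim (fun j => h a = some j) fun k => (g a).2 = some k)

/-- `j` sits at position `a` iff its class is placed at `a`. -/
noncomputable def middleEntries {P : Type*} (p : Quotient u ↪ P) : P → Option J :=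
  partialInv fun j => p ⟦Sum.inr (Sum.inl j)⟧

variable {u g} {h : Fin d → Option J}

theorem occurs3_comp_pi12 :
    (fun a x => Occurs3 g h a (Sum.map id Sum.inl x)) = Occurs (fun a => ((g a).1, h a)) := by
  funext a x; rcases x with _ | _ <;> rfl

theorem occurs3_comp_pi23 :
    (fun a x => Occurs3 g h a (Sum.inr x)) = Occurs (fun a => (h a, (g a).2)) := by
  funext a x; rcases x with _ | _ <;> rfl

theorem occurs3_sumMap_inr_iff {a : Fin d} {x : I ⊕ K} :
    Occurs3 g h a (Sum.map id Sum.inr x) ↔ Occurs g a x := by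
  rcases x with _ | _ <;> rfl

theorem isAdaptedExtension_iff_isPlacement (hu : IsRecollement3 u) (hg : Adapted (pi13 u) g) :
    IsAdaptedExtension u g h ↔ IsPlacement u (Occurs3 g h) := by
  rw [IsAdaptedExtension, adapted_iff_isPlacement hu.isRecollement_pi12,
    adapted_iff_isPlacement hu.isRecollement_pi23]
  constructor
  · rintro ⟨h12, h23⟩
    have h13 := (adapted_iff_isPlacement hu.isRecollement_pi13).1 hg
    refine ⟨?_, ?_⟩
    · rintro (i | j | k)
      exacts [h12.1 (Sum.inl i), h12.1 (Sum.inr j), h23.1 (Sum.inr k)]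
    · rintro a (i | j | k) (i' | j' | k')
      exacts [h12.2 a (.inl i) (.inl i'), h12.2 a (.inl i) (.inr j'), h13.2 a (.inl i) (.inr k'),
        h12.2 a (.inr j) (.inl i'), h12.2 a (.inr j) (.inr j'), h23.2 a (.inl j) (.inr k'),
        h13.2 a (.inr k) (.inl i'), h23.2 a (.inr k) (.inl j'), h23.2 a (.inr k) (.inr k')]
  · intro hP
    rw [← occurs3_comp_pi12, ← occurs3_comp_pi23]
    exact ⟨hP.comap _, hP.comap _⟩

end Extension

section Count

variable {I J K : Type*} {d : ℕ} {u : Setoid (I ⊕ J ⊕ K)} {g : Fin d → Option I × Option K}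
  {h : Fin d → Option J} {p : Quotient u ↪ Fin d} {p₀ : Quotient (pi13 u) ↪ Fin d}

theorem middleEntries_eq_some_iff {P : Type*} (hu : IsRecollement3 u) (p : Quotient u ↪ P)
    (a : P) (j : J) : middleEntries u p a = some j ↔ p ⟦Sum.inr (Sum.inl j)⟧ = a :=
  Injective.isPartialInv (fun _ _ hjj' => hu.2.1 _ _ (Quotient.exact (p.injective hjj'))) j a

theorem eq_middleEntries (hu : IsRecollement3 u) (hp : ∀ a x, Occurs3 g h a x ↔ p ⟦x⟧ = a) :
    h = middleEntries u p :=
  funext fun a => Option.ext fun j =>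
    (hp a (Sum.inr (Sum.inl j))).trans (middleEntries_eq_some_iff hu p a j).symm

theorem extends_of_forall_occurs3_iff (hp₀ : ∀ a x, Occurs g a x ↔ p₀ ⟦x⟧ = a)
    (hp : ∀ a x, Occurs3 g h a x ↔ p ⟦x⟧ = a) :
    ∀ c, p (Setoid.comapQuotientEmbedding _ u c) = p₀ c := by
  rintro ⟨x⟩
  exact (hp _ _).1 (occurs3_sumMap_inr_iff.2 ((hp₀ _ x).2 rfl))

theorem occurs3_middleEntries_iff (hu : IsRecollement3 u)
    (hp₀ : ∀ a x, Occurs g a x ↔ p₀ ⟦x⟧ = a)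
    (hext : ∀ c, p (Setoid.comapQuotientEmbedding _ u c) = p₀ c) :
    ∀ a x, Occurs3 g (middleEntries u p) a x ↔ p ⟦x⟧ = a := by
  rintro a (i | j | k)
  · exact (hp₀ a (Sum.inl i)).trans (Eq.congr_left (hext ⟦Sum.inl i⟧).symm)
  · exact middleEntries_eq_some_iff hu p a j
  · exact (hp₀ a (Sum.inr k)).trans (Eq.congr_left (hext ⟦Sum.inr k⟧).symm)

theorem card_isAdaptedExtension (hu : IsRecollement3 u) (hg : Adapted (pi13 u) g)
    (hp₀ : ∀ a x, Occurs g a x ↔ p₀ ⟦x⟧ = a) :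
    Nat.card {h // IsAdaptedExtension u g h} =
      Nat.card {p : Quotient u ↪ Fin d //
        ∀ c, p (Setoid.comapQuotientEmbedding _ u c) = p₀ c} := by
  have hcorr : ∀ h, IsAdaptedExtension u g h ↔
      ∃ p : Quotient u ↪ Fin d, ∀ a x, Occurs3 g h a x ↔ p ⟦x⟧ = a :=
    fun h => (isAdaptedExtension_iff_isPlacement hu hg).trans IsPlacement.iff_exists_embedding
  symm
  refine Nat.card_eq_of_bijective (fun p => ⟨middleEntries u p.1, (hcorr _).2
    ⟨p.1, occurs3_middleEntries_iff hu hp₀ p.2⟩⟩) ⟨fun p p' hpp' => ?_, fun h => ?_⟩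
  · refine Subtype.ext
      (Quotient.embedding_eq_of_forall_iff (occurs3_middleEntries_iff hu hp₀ p.2) ?_)
    rw [show middleEntries u p.1 = middleEntries u p'.1 from congrArg Subtype.val hpp']
    exact occurs3_middleEntries_iff hu hp₀ p'.2
  · obtain ⟨p, hp⟩ := (hcorr h.1).1 h.2
    exact ⟨⟨p, extends_of_forall_occurs3_iff hp₀ hp⟩, Subtype.ext (eq_middleEntries hu hp).symm⟩

end Count

theorem count_adapted_extensions_general {I J K : Type*} [Finite I] [Finite J] [Finite K]
    (u : Setoid (I ⊕ J ⊕ K)) (hu : IsRecollement3 u) (d : ℕ)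
    (g : Fin d → Option I × Option K) (hg : Adapted (pi13 u) g) :
    Nat.card {h : Fin d → Option J //
        Adapted (pi12 u) (fun a => ((g a).1, h a)) ∧
        Adapted (pi23 u) (fun a => (h a, (g a).2))} =
      (d - Nat.card (Quotient (pi13 u))).descFactorial
        (Nat.card (Quotient u) - Nat.card (Quotient (pi13 u))) := by
  obtain ⟨p₀, hp₀⟩ := IsPlacement.iff_exists_embedding.1
    ((adapted_iff_isPlacement hu.isRecollement_pi13).1 hg)
  have := (card_isAdaptedExtension hu hg hp₀).trans (Function.Embedding.card_extensions _ p₀)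
  rwa [Nat.card_fin] at this

/-- Given a recollement `u` of `I, J, K` and `d ≥ #π₁,₃(u)`, and a fixed
sequence `g` adapted to `π₁,₃(u)`, the number of ways to interpolate entries
`j₁,…,j_d ∈ J ⊔ {∅}` making the two resulting sequences adapted to
`r = π₁,₂(u)` and `s = π₂,₃(u)` respectively is the falling factorial
`(d − #π₁,₃(u))(d − #π₁,₃(u) − 1) ⋯ (d − #u + 1)`. -/
theorem count_adapted_extensions {I J K : Type*} [Finite I] [Finite J] [Finite K]
    (u : Setoid (I ⊕ J ⊕ K)) (hu : IsRecollement3 u) (d : ℕ)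
    (hd : Nat.card (Quotient (pi13 u)) ≤ d)
    (g : Fin d → Option I × Option K) (hg : Adapted (pi13 u) g) :
    Nat.card {h : Fin d → Option J //
        Adapted (pi12 u) (fun a => ((g a).1, h a)) ∧
        Adapted (pi23 u) (fun a => (h a, (g a).2))} =
      (d - Nat.card (Quotient (pi13 u))).descFactorial
        (Nat.card (Quotient u) - Nat.card (Quotient (pi13 u))) :=
  count_adapted_extensions_general u hu d g hg
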